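/- arXiv:2303.02012 — 3 statements merged into one kernel-verified Lean document; each statement's English description precedes it below -/
import Mathlib

section
/- Let X and Y be real normed vector spaces and let P : X → Y be a compact linear operator, i.e. a continuous linear map sending bounded subsets of X to precompact subsets of Y. Then the dual (adjoint) map P* : Y* → X*, defined by P*(y*) = y* ∘ P, is a compact linear operator between the dual spaces Y* and X* equipped with their operator norms. -/
/-!
Let `S = P(B)` be the image of the closed unit ball, a totally bounded set, and fix a finite
`δ`-net `N` of `S`. Functionals of norm at most `M` that are `η`-close on `N` are
`(η + 2Mδ)`-close on `S`, so their composites with `P` are `(η + 2Mδ)`-close in norm.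
A bounded set of functionals restricted to the finite set `N` lies in the finite-dimensional space
`N → ℝ`, where it is totally bounded; this yields a finite `ε`-net of `{y* ∘ P : y* ∈ t}`.
-/

open Metric Set

theorem exists_finite_cover_image_of_totallyBounded_image {α β γ : Type*}
    [PseudoMetricSpace β] [PseudoMetricSpace γ] {f : α → β} {g : α → γ} {s : Set α} {δ ε : ℝ}
    (hg : TotallyBounded (g '' s)) (hδ : 0 < δ)
    (hfg : ∀ a ∈ s, ∀ b ∈ s, dist (g a) (g b) < δ → dist (f a) (f b) < ε) :
    ∃ u : Set β, u.Finite ∧ f '' s ⊆ ⋃ y ∈ u, ball y ε := by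
  obtain ⟨c, hcs, hc, hcov⟩ :=
    Set.exists_subset_image_finite_and.1 (finite_approx_of_totallyBounded hg δ hδ)
  refine ⟨f '' c, hc.image f, ?_⟩
  rintro _ ⟨a, ha, rfl⟩
  obtain ⟨_, ⟨b, hb, rfl⟩, hab⟩ := mem_iUnion₂.1 (hcov ⟨a, ha, rfl⟩)
  exact mem_biUnion (mem_image_of_mem f hb) (hfg a ha b (hcs hb) hab)

theorem ContinuousLinearMap.opNorm_comp_le_of_forall_mem_net {𝕜 X Y F : Type*} [RCLike 𝕜]
    [NormedAddCommGroup X] [NormedSpace 𝕜 X] [NormedAddCommGroup Y] [NormedSpace 𝕜 Y]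
    [NormedAddCommGroup F] [NormedSpace 𝕜 F] (h : Y →L[𝕜] F) (P : X →L[𝕜] Y)
    {N : Set Y} {c δ : ℝ} (hc : 0 ≤ c) (hδ : 0 ≤ δ)
    (hN : P '' closedBall 0 1 ⊆ ⋃ n ∈ N, ball n δ) (hhN : ∀ n ∈ N, ‖h n‖ ≤ c) :
    ‖h.comp P‖ ≤ c + ‖h‖ * δ := by
  refine opNorm_le_of_unit_norm (by positivity) fun x hx => ?_
  obtain ⟨n, hn, hxn⟩ := mem_iUnion₂.1 (hN ⟨x, by simp [hx], rfl⟩)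
  calc ‖h (P x)‖ = ‖h n + h (P x - n)‖ := by rw [map_sub, add_sub_cancel]
    _ ≤ ‖h n‖ + ‖h‖ * ‖P x - n‖ := norm_add_le_of_le le_rfl (h.le_opNorm _)
    _ ≤ c + ‖h‖ * δ := by gcongr; exacts [hhN n hn, (mem_ball_iff_norm.1 hxn).le]

/-- If `P : X → Y` is a compact continuous linear operator between real normed
spaces (bounded sets are mapped to totally bounded sets), then the dual map
`P* : Y* → X*`, `y* ↦ y* ∘ P`, is a compact linear operator between the dual
spaces equipped with their operator norms. -/
theorem dual_compactness
    {X Y : Type*} [NormedAddCommGroup X] [NormedSpace ℝ X]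
    [NormedAddCommGroup Y] [NormedSpace ℝ Y]
    (P : X →L[ℝ] Y)
    (hP : ∀ s : Set X, Bornology.IsBounded s → TotallyBounded (P '' s)) :
    ∀ t : Set (Y →L[ℝ] ℝ), Bornology.IsBounded t →
      TotallyBounded ((fun ystar : Y →L[ℝ] ℝ => ystar.comp P) '' t) := by
  intro t ht
  refine totallyBounded_iff.2 fun ε hε => ?_
  obtain ⟨M, hM, htM⟩ := ht.exists_pos_norm_le
  set δ := ε / (4 * M)
  have hδ : 0 < δ := by positivity
  obtain ⟨N, hN, hNnet⟩ := totallyBounded_iff.1 (hP _ isBounded_closedBall) δ hδ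
  have := hN.fintype
  let Φ : (Y →L[ℝ] ℝ) →L[ℝ] (N → ℝ) :=
    ContinuousLinearMap.pi fun n => ContinuousLinearMap.apply ℝ ℝ (n : Y)
  have hΦt : TotallyBounded (Φ '' t) :=
    (Φ.lipschitz.isBounded_image ht).isCompact_closure.totallyBounded.subset subset_closure
  have hΦ : ∀ f g, ∀ n ∈ N, ‖(f - g) n‖ ≤ dist (Φ f) (Φ g) := fun f g n hn => by
    simpa [Φ, dist_eq_norm] using dist_le_pi_dist (Φ f) (Φ g) ⟨n, hn⟩
  refine exists_finite_cover_image_of_totallyBounded_image hΦt (half_pos hε)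
    fun f hf g hg hfg => ?_
  have hfg_norm : ‖f - g‖ ≤ 2 * M := by linarith [norm_sub_le f g, htM f hf, htM g hg]
  calc dist (f.comp P) (g.comp P) = ‖(f - g).comp P‖ := by
        rw [dist_eq_norm, ContinuousLinearMap.sub_comp]
    _ ≤ dist (Φ f) (Φ g) + ‖f - g‖ * δ :=
        (f - g).opNorm_comp_le_of_forall_mem_net P dist_nonneg hδ.le hNnet (hΦ f g)
    _ < ε / 2 + 2 * M * δ := add_lt_add_of_lt_of_le hfg (by gcongr)
    _ = ε := by simp only [δ]; field_simp; ring
end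

section
/- Let X and Y be real normed vector spaces and let d : Y → X be a linear map (not assumed continuous). For ω ∈ X define N(ω) = inf { max(‖φ‖, ‖ψ‖) : φ ∈ X, ψ ∈ Y, ω = φ + d ψ }. Let T : X → ℝ be a linear functional such that both T and T ∘ d are bounded (continuous). Then sup { T(ω) : ω ∈ X, N(ω) ≤ 1 } = ‖T‖_{X*} + ‖T ∘ d‖_{Y*}. -/
lemma aux_exists_near_opNorm {Z : Type*} [NormedAddCommGroup Z] [NormedSpace ℝ Z]
    (f : Z →L[ℝ] ℝ) {ε : ℝ} (hε : 0 < ε) :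
    ∃ z : Z, ‖z‖ ≤ 1 ∧ ‖f‖ - ε ≤ f z := by
  rcases le_or_gt ‖f‖ ε with h | h
  · exact ⟨0, by simp, by simp; linarith⟩
  · obtain ⟨z, hz, hfz⟩ := f.exists_lt_apply_of_lt_opNorm (show ‖f‖ - ε < ‖f‖ by linarith)
    rcases le_or_gt 0 (f z) with h0 | h0
    · refine ⟨z, hz.le, ?_⟩
      rw [Real.norm_eq_abs, abs_of_nonneg h0] at hfz; linarith
    · refine ⟨-z, by simpa using hz.le, ?_⟩
      rw [map_neg]
      rw [Real.norm_eq_abs, abs_of_neg h0] at hfz; linarith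

/-- Abstract form of the identity `N(T) = M(T) + M(∂T) = sup { T ω : N(ω) ≤ 1 }`.
Let `d : Y → X` be a linear map, `N(ω) = inf { max(‖φ‖,‖ψ‖) : ω = φ + d ψ }`,
and let `T` be a linear functional on `X` such that `T` and `T ∘ d` are bounded
(given as continuous linear functionals `T` and `Td` with `Td = T ∘ d`). Then
`sup { T ω : N(ω) ≤ 1 } = ‖T‖ + ‖T ∘ d‖`. -/
theorem sup_normalNorm_le_one_eq_opNorm_add
    {X Y : Type*} [NormedAddCommGroup X] [NormedSpace ℝ X]
    [NormedAddCommGroup Y] [NormedSpace ℝ Y]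
    (d : Y →ₗ[ℝ] X) (T : X →L[ℝ] ℝ) (Td : Y →L[ℝ] ℝ)
    (hTd : ∀ y : Y, Td y = T (d y)) :
    sSup {t : ℝ | ∃ ω : X,
        sInf {c : ℝ | ∃ φ : X, ∃ ψ : Y, ω = φ + d ψ ∧ c = max ‖φ‖ ‖ψ‖} ≤ 1 ∧
        t = T ω}
      = ‖T‖ + ‖Td‖ := by
  set S : Set ℝ := {t : ℝ | ∃ ω : X,
      sInf {c : ℝ | ∃ φ : X, ∃ ψ : Y, ω = φ + d ψ ∧ c = max ‖φ‖ ‖ψ‖} ≤ 1 ∧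
      t = T ω} with hSdef
  set K : ℝ := ‖T‖ + ‖Td‖ with hKdef
  have hK0 : (0:ℝ) ≤ K := by positivity
  -- lower bound on all inf-sets
  have hbdd : ∀ ω : X, BddBelow {c : ℝ | ∃ φ : X, ∃ ψ : Y, ω = φ + d ψ ∧ c = max ‖φ‖ ‖ψ‖} := by
    intro ω
    refine ⟨0, ?_⟩
    rintro c ⟨φ, ψ, -, rfl⟩
    exact le_trans (norm_nonneg φ) (le_max_left _ _)
  -- upper bound : every t ∈ S is at most K
  have hub : ∀ t ∈ S, t ≤ K := by
    rintro t ⟨ω, hω, rfl⟩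
    refine le_of_forall_pos_le_add ?_
    intro ε hε
    have hε' : 0 < ε / (K + 1) := by positivity
    have hne : ({c : ℝ | ∃ φ : X, ∃ ψ : Y, ω = φ + d ψ ∧ c = max ‖φ‖ ‖ψ‖}).Nonempty :=
      ⟨max ‖ω‖ ‖(0:Y)‖, ω, 0, by simp, rfl⟩
    have hlt : sInf {c : ℝ | ∃ φ : X, ∃ ψ : Y, ω = φ + d ψ ∧ c = max ‖φ‖ ‖ψ‖}
        < 1 + ε / (K + 1) := lt_of_le_of_lt hω (by linarith)
    obtain ⟨c, ⟨φ, ψ, rfl, rfl⟩, hc⟩ := exists_lt_of_csInf_lt hne hlt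
    have h1 : T (φ + d ψ) = T φ + Td ψ := by rw [map_add, hTd ψ]
    have h2 : T φ ≤ ‖T‖ * ‖φ‖ := le_trans (le_abs_self _) (T.le_opNorm φ)
    have h3 : Td ψ ≤ ‖Td‖ * ‖ψ‖ := le_trans (le_abs_self _) (Td.le_opNorm ψ)
    have hφ : ‖φ‖ ≤ 1 + ε / (K + 1) := le_trans (le_max_left _ _) hc.le
    have hψ : ‖ψ‖ ≤ 1 + ε / (K + 1) := le_trans (le_max_right _ _) hc.le
    have hT0 : (0:ℝ) ≤ ‖T‖ := norm_nonneg _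
    have hTd0 : (0:ℝ) ≤ ‖Td‖ := norm_nonneg _
    have hKε : K * (ε / (K + 1)) ≤ ε := by
      rw [mul_div_assoc']
      rw [div_le_iff₀ (by positivity)]
      nlinarith
    have : T (φ + d ψ) ≤ K * (1 + ε / (K + 1)) := by
      rw [h1]
      calc T φ + Td ψ ≤ ‖T‖ * ‖φ‖ + ‖Td‖ * ‖ψ‖ := add_le_add h2 h3
        _ ≤ ‖T‖ * (1 + ε / (K + 1)) + ‖Td‖ * (1 + ε / (K + 1)) :=
            add_le_add (by nlinarith) (by nlinarith)
        _ = K * (1 + ε / (K + 1)) := by ring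
    calc T (φ + d ψ) ≤ K * (1 + ε / (K + 1)) := this
      _ = K + K * (ε / (K + 1)) := by ring
      _ ≤ K + ε := by linarith
  have hSne : S.Nonempty := by
    refine ⟨T 0, 0, ?_, rfl⟩
    have h0mem : (0:ℝ) ∈ {c : ℝ | ∃ φ : X, ∃ ψ : Y, (0:X) = φ + d ψ ∧ c = max ‖φ‖ ‖ψ‖} :=
      ⟨0, 0, by simp, by simp⟩
    exact le_trans (csInf_le (hbdd 0) h0mem) zero_le_one
  have hSbdd : BddAbove S := ⟨K, hub⟩
  refine le_antisymm (Real.sSup_le hub hK0) ?_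
  refine le_of_forall_pos_le_add ?_
  intro ε hε
  obtain ⟨φ, hφ1, hφ2⟩ := aux_exists_near_opNorm T (half_pos hε)
  obtain ⟨ψ, hψ1, hψ2⟩ := aux_exists_near_opNorm Td (half_pos hε)
  have hmem : T (φ + d ψ) ∈ S := by
    refine ⟨φ + d ψ, ?_, rfl⟩
    have hc : max ‖φ‖ ‖ψ‖ ∈
        {c : ℝ | ∃ φ' : X, ∃ ψ' : Y, φ + d ψ = φ' + d ψ' ∧ c = max ‖φ'‖ ‖ψ'‖} :=
      ⟨φ, ψ, rfl, rfl⟩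
    exact le_trans (csInf_le (hbdd _) hc) (max_le hφ1 hψ1)
  have hval : K - ε ≤ T (φ + d ψ) := by
    have h1 : T (φ + d ψ) = T φ + Td ψ := by rw [map_add, hTd ψ]
    rw [h1]; linarith
  calc K ≤ T (φ + d ψ) + ε := by linarith
    _ ≤ sSup S + ε := by gcongr; exact le_csSup hSbdd hmem
end

section
/- Let X and Y be real normed vector spaces and let d : X → Y be a linear map (not assumed continuous). Let T : X → ℝ be a linear functional such that F(T) := sup { T(ω) : ω ∈ X, max(‖ω‖, ‖d ω‖) ≤ 1 } is finite. Then there exist continuous linear functionals S ∈ X* and R ∈ Y* with T = S + R ∘ d and ‖S‖_{X*} + ‖R‖_{Y*} = F(T); moreover F(T) = inf { ‖S‖_{X*} + ‖R‖_{Y*} : S ∈ X*, R ∈ Y*, T = S + R ∘ d }, and this infimum is attained. -/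
/-- Abstract Hahn–Banach duality for the flat norm (as in Federer 4.1.12).
Let `d : X → Y` be a linear map and `T` a linear functional on `X` such that
`F(T) = sup { T ω : max(‖ω‖, ‖d ω‖) ≤ 1 }` is finite (the set of values is
bounded above). Then there exist continuous linear functionals `S ∈ X*`,
`R ∈ Y*` with `T = S + R ∘ d` and `‖S‖ + ‖R‖ = F(T)`; moreover `F(T)` is the
infimum — in fact the least element, so the infimum is attained — of
`‖S‖ + ‖R‖` over all such decompositions. -/
theorem flatMass_isLeast_decompositions
    {X Y : Type*} [NormedAddCommGroup X] [NormedSpace ℝ X]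
    [NormedAddCommGroup Y] [NormedSpace ℝ Y]
    (d : X →ₗ[ℝ] Y) (T : X →ₗ[ℝ] ℝ)
    (hbdd : BddAbove {t : ℝ | ∃ ω : X, max ‖ω‖ ‖d ω‖ ≤ 1 ∧ t = T ω}) :
    IsLeast
      {c : ℝ | ∃ S : X →L[ℝ] ℝ, ∃ R : Y →L[ℝ] ℝ,
        (∀ x : X, T x = S x + R (d x)) ∧ c = ‖S‖ + ‖R‖}
      (sSup {t : ℝ | ∃ ω : X, max ‖ω‖ ‖d ω‖ ≤ 1 ∧ t = T ω}) := by
  set A := {t : ℝ | ∃ ω : X, max ‖ω‖ ‖d ω‖ ≤ 1 ∧ t = T ω} with hA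
  set M := sSup A with hM
  have h0 : (0 : ℝ) ∈ A := ⟨0, by simp⟩
  have hM0 : 0 ≤ M := le_csSup hbdd h0
  -- key estimate : T ω ≤ M * max ‖ω‖ ‖d ω‖
  have key : ∀ ω : X, T ω ≤ M * max ‖ω‖ ‖d ω‖ := by
    intro ω
    set m := max ‖ω‖ ‖d ω‖ with hm
    have hm0 : 0 ≤ m := le_trans (norm_nonneg ω) (le_max_left _ _)
    rcases eq_or_lt_of_le hm0 with h | h
    · have hω : ω = 0 := norm_eq_zero.mp
        (le_antisymm ((le_max_left ‖ω‖ ‖d ω‖).trans h.ge) (norm_nonneg ω))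
      rw [hω]; simp [← h]
    · have hmem : m⁻¹ * T ω ∈ A := by
        refine ⟨m⁻¹ • ω, ?_, by simp⟩
        have : max ‖m⁻¹ • ω‖ ‖d (m⁻¹ • ω)‖ = m⁻¹ * m := by
          rw [map_smul, norm_smul, norm_smul, Real.norm_eq_abs,
            abs_of_pos (inv_pos.mpr h), ← mul_max_of_nonneg _ _ (inv_pos.mpr h).le]
        rw [this, inv_mul_cancel₀ h.ne']
      have hle : m⁻¹ * T ω ≤ M := le_csSup hbdd hmem
      calc T ω = m * (m⁻¹ * T ω) := by field_simp
        _ ≤ m * M := by nlinarith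
        _ = M * m := mul_comm _ _
  -- Hahn–Banach extension from the graph of d
  set G : Submodule ℝ (X × Y) := LinearMap.graph d with hG
  let f : (X × Y) →ₗ.[ℝ] ℝ :=
    ⟨G, T.comp ((LinearMap.fst ℝ X Y).comp G.subtype)⟩
  have hf : ∀ z : f.domain, f z ≤ M * ‖(z : X × Y)‖ := by
    rintro ⟨⟨x, y⟩, hz⟩
    have hy : y = d x := (LinearMap.mem_graph_iff d (x, y)).mp hz
    have : f ⟨(x, y), hz⟩ = T x := rfl
    rw [this]
    have : ‖((x, y) : X × Y)‖ = max ‖x‖ ‖d x‖ := by rw [Prod.norm_def, hy]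
    rw [this]
    exact key x
  obtain ⟨g, hg, hgle⟩ := exists_extension_of_le_sublinear f (fun z => M * ‖z‖)
    (fun c hc z => show M * ‖c • z‖ = c * (M * ‖z‖) by
      rw [norm_smul, Real.norm_eq_abs, abs_of_pos hc]; ring)
    (fun z w => show M * ‖z + w‖ ≤ M * ‖z‖ + M * ‖w‖ by
      nlinarith [norm_add_le z w, norm_nonneg z, norm_nonneg w])
    hf
  have hgbound : ∀ z, ‖g z‖ ≤ M * ‖z‖ := by
    intro z
    rw [Real.norm_eq_abs, abs_le]
    constructor
    · have := hgle (-z)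
      simp only [map_neg, norm_neg] at this
      linarith
    · exact hgle z
  set Φ : (X × Y) →L[ℝ] ℝ := g.mkContinuous M hgbound with hΦ
  have hΦapp : ∀ z, Φ z = g z := fun z => rfl
  set S : X →L[ℝ] ℝ := Φ.comp (ContinuousLinearMap.inl ℝ X Y) with hS
  set R : Y →L[ℝ] ℝ := Φ.comp (ContinuousLinearMap.inr ℝ X Y) with hR
  have hsplit : ∀ x y, Φ (x, y) = S x + R y := by
    intro x y
    have : ((x, y) : X × Y) = (x, 0) + (0, y) := by simp
    rw [this, map_add]
    rfl
  have hdecomp : ∀ x : X, T x = S x + R (d x) := by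
    intro x
    have hmem : ((x, d x) : X × Y) ∈ G := (LinearMap.mem_graph_iff d (x, d x)).mpr rfl
    have := hg ⟨(x, d x), hmem⟩
    have hfval : f ⟨(x, d x), hmem⟩ = T x := rfl
    rw [← hsplit, hΦapp, this, hfval]
  -- lower bound property: any decomposition has ‖S‖+‖R‖ ≥ M
  have hlb : ∀ c ∈ {c : ℝ | ∃ S : X →L[ℝ] ℝ, ∃ R : Y →L[ℝ] ℝ,
      (∀ x : X, T x = S x + R (d x)) ∧ c = ‖S‖ + ‖R‖}, M ≤ c := by
    rintro c ⟨S', R', hdec, rfl⟩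
    refine Real.sSup_le ?_ (by positivity)
    rintro t ⟨ω, hω, rfl⟩
    have h1 : ‖ω‖ ≤ 1 := le_trans (le_max_left _ _) hω
    have h2 : ‖d ω‖ ≤ 1 := le_trans (le_max_right _ _) hω
    calc T ω = S' ω + R' (d ω) := hdec ω
      _ ≤ ‖S' ω‖ + ‖R' (d ω)‖ := add_le_add (le_abs_self _) (le_abs_self _)
      _ ≤ ‖S'‖ * ‖ω‖ + ‖R'‖ * ‖d ω‖ := add_le_add (S'.le_opNorm ω) (R'.le_opNorm (d ω))
      _ ≤ ‖S'‖ * 1 + ‖R'‖ * 1 := add_le_add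
          (mul_le_mul_of_nonneg_left h1 (norm_nonneg _))
          (mul_le_mul_of_nonneg_left h2 (norm_nonneg _))
      _ = ‖S'‖ + ‖R'‖ := by ring
  -- upper bound for the constructed decomposition : ‖S‖ + ‖R‖ ≤ M
  have hub : ‖S‖ + ‖R‖ ≤ M := by
    by_contra hcon
    push_neg at hcon
    set ε := (‖S‖ + ‖R‖ - M) / 2 with hε
    have hεpos : 0 < ε := by simp only [hε]; linarith
    obtain ⟨x, hx1, hx2⟩ := S.exists_lt_apply_of_lt_opNorm (show ‖S‖ - ε < ‖S‖ by linarith)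
    obtain ⟨y, hy1, hy2⟩ := R.exists_lt_apply_of_lt_opNorm (show ‖R‖ - ε < ‖R‖ by linarith)
    -- fix signs
    obtain ⟨x', hx'1, hx'2⟩ : ∃ x' : X, ‖x'‖ < 1 ∧ ‖S‖ - ε < S x' := by
      rcases le_or_gt 0 (S x) with h | h
      · exact ⟨x, hx1, by rwa [Real.norm_eq_abs, abs_of_nonneg h] at hx2⟩
      · exact ⟨-x, by rwa [norm_neg], by
          rw [map_neg]; rwa [Real.norm_eq_abs, abs_of_neg h] at hx2⟩
    obtain ⟨y', hy'1, hy'2⟩ : ∃ y' : Y, ‖y'‖ < 1 ∧ ‖R‖ - ε < R y' := by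
      rcases le_or_gt 0 (R y) with h | h
      · exact ⟨y, hy1, by rwa [Real.norm_eq_abs, abs_of_nonneg h] at hy2⟩
      · exact ⟨-y, by rwa [norm_neg], by
          rw [map_neg]; rwa [Real.norm_eq_abs, abs_of_neg h] at hy2⟩
    have hΦle : Φ (x', y') ≤ M := by
      calc Φ (x', y') = g (x', y') := hΦapp _
        _ ≤ M * ‖((x', y') : X × Y)‖ := hgle _
        _ ≤ M * 1 := by
            refine mul_le_mul_of_nonneg_left ?_ hM0
            rw [Prod.norm_def]
            exact max_le hx'1.le hy'1.le
        _ = M := mul_one M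
    rw [hsplit] at hΦle
    have : ‖S‖ + ‖R‖ - 2 * ε < M := by linarith
    simp only [hε] at this
    linarith
  have heq : ‖S‖ + ‖R‖ = M := le_antisymm hub (hlb _ ⟨S, R, hdecomp, rfl⟩)
  exact ⟨⟨S, R, hdecomp, heq.symm⟩, hlb⟩
end
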